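/- Let F be a field of characteristic zero and n ≥ 4. For each 1 ≤ k ≤ n−3, the rational function χ_k = ξ_k / x_1^{k+1} is annihilated by the Euler derivation F_T = Σ_{j=1}^{n−1} x_j ∂/∂x_j of the field of rational functions F(x_1, …, x_{n−1}); equivalently, as a smooth function on the open set {x ∈ ℝ^{n−1} : x_1 ≠ 0} (when F = ℝ) it satisfies Σ_{j=1}^{n−1} x_j · ∂χ_k/∂x_j = 0. (These are the n−3 generalized Casimir invariants of the solvable Lie algebra s_{n+1,4}.) -/

import Mathlib

open MvPolynomial in
/-- The polynomial invariants `ξ_k` of the coadjoint representation of `n_{n,1}`: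
`ξ_0 = x 1` and, for `k ≥ 1`,
`ξ_k = ((-1)^k k/(k+1)!) x_2^{k+1} + Σ_{j=0}^{k-1} ((-1)^j/j!) x_2^j x_{k+2-j} x_1^{k-j}`. -/
noncomputable def xi (F : Type*) [Field F] : ℕ → MvPolynomial ℕ F
  | 0 => X 1
  | k + 1 =>
      C ((-1 : F) ^ (k + 1) * ((k + 1 : ℕ) : F) / (((k + 2).factorial : ℕ) : F)) *
          X 2 ^ (k + 2) +
        ∑ j ∈ Finset.range (k + 1),
          C ((-1 : F) ^ j / ((j.factorial : ℕ) : F)) * X 2 ^ j *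
            X (k + 3 - j) * X 1 ^ (k + 1 - j)

/-- The `1`-based coordinates of a point `x ∈ ℝ^{n-1}`: `coords n x i = x_i` for
`1 ≤ i ≤ n-1` and `0` otherwise. -/
noncomputable def coords (n : ℕ) (x : Fin (n - 1) → ℝ) : ℕ → ℝ :=
  fun i => if h : 1 ≤ i ∧ i ≤ n - 1 then x ⟨i - 1, by omega⟩ else 0

/-- The `j`-th coordinate unit vector of `ℝ^{n-1}` (`1`-based). -/
noncomputable def unitv (n : ℕ) (j : ℕ) : Fin (n - 1) → ℝ :=
  fun i => if i.val + 1 = j then 1 else 0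

/-- The generalized Casimir invariants of the solvable Lie algebra `s_{n+1,4}`:
`χ_k = ξ_k / x_1^{k+1}`. -/
noncomputable def chiS4 (n : ℕ) (k : ℕ) (x : Fin (n - 1) → ℝ) : ℝ :=
  MvPolynomial.eval (coords n x) (xi ℝ k) / (coords n x 1) ^ (k + 1)


/-!
`ξ_k` is a homogeneous polynomial of degree `k + 1`, so `χ_k = ξ_k / x_1^{k+1}` is invariant
under every scaling `x ↦ t • x` with `t ≠ 0`. Differentiating `t ↦ χ_k (t • x)` at `t = 1`
gives `Σ_j x_j ∂χ_k/∂x_j = 0`.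
-/

open MvPolynomial Filter Topology

theorem MvPolynomial.IsHomogeneous.eval_smul {σ R : Type*} [CommSemiring R]
    {φ : MvPolynomial σ R} {m : ℕ} (hφ : φ.IsHomogeneous m) (t : R) (x : σ → R) :
    eval (t • x) φ = t ^ m * eval x φ := by
  simp only [eval_eq, Finset.mul_sum]
  refine Finset.sum_congr rfl fun d hd => ?_
  simp only [Pi.smul_apply, smul_eq_mul, mul_pow, Finset.prod_mul_distrib,
    Finset.prod_pow_eq_pow_sum, ← hφ.degree_eq_sum_deg_support hd]
  ring

theorem MvPolynomial.differentiable_eval_comp {𝕜 E σ : Type*} [NontriviallyNormedField 𝕜]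
    [NormedAddCommGroup E] [NormedSpace 𝕜 E] {g : E → σ → 𝕜}
    (hg : ∀ i, Differentiable 𝕜 fun y => g y i) (p : MvPolynomial σ 𝕜) :
    Differentiable 𝕜 fun y => eval (g y) p := by
  induction p using MvPolynomial.induction_on with
  | C a => simp only [eval_C]; exact differentiable_const a
  | add p q hp hq => simp only [map_add]; exact hp.add hq
  | mul_X p i hp => simp only [map_mul, eval_X]; exact hp.mul (hg i)

theorem fderiv_apply_self_eq_zero_of_eventually_smul {𝕜 E F : Type*}
    [NontriviallyNormedField 𝕜] [NormedAddCommGroup E] [NormedSpace 𝕜 E]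
    [NormedAddCommGroup F] [NormedSpace 𝕜 F] {f : E → F} {x : E}
    (hf : DifferentiableAt 𝕜 f x) (hinv : ∀ᶠ t in 𝓝 (1 : 𝕜), f (t • x) = f x) :
    fderiv 𝕜 f x x = 0 := by
  have hcurve : HasDerivAt (fun t : 𝕜 => t • x) x 1 := by
    simpa using (hasDerivAt_id (1 : 𝕜)).smul_const x
  have hf' : HasFDerivAt f (fderiv 𝕜 f x) ((1 : 𝕜) • x) := by
    rw [one_smul]
    exact hf.hasFDerivAt
  exact (hf'.comp_hasDerivAt 1 hcurve).unique
    ((hasDerivAt_const 1 (f x)).congr_of_eventuallyEq hinv)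

theorem xi_isHomogeneous (F : Type*) [Field F] (k : ℕ) : (xi F k).IsHomogeneous (k + 1) := by
  cases k with
  | zero => exact isHomogeneous_X F 1
  | succ k =>
    refine (isHomogeneous_C_mul_X_pow _ 2 _).add
      (IsHomogeneous.sum _ _ _ fun j hj => ?_)
    have hjk : j ≤ k := Nat.lt_succ_iff.mp (Finset.mem_range.mp hj)
    convert ((isHomogeneous_C_mul_X_pow _ 2 j).mul (isHomogeneous_X F _)).mul
      (isHomogeneous_X_pow 1 (k + 1 - j)) using 1
    omega

section Coordinates

variable {n : ℕ}

theorem coords_smul (t : ℝ) (x : Fin (n - 1) → ℝ) : coords n (t • x) = t • coords n x := by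
  funext i
  simp only [coords, Pi.smul_apply, smul_eq_mul]
  split <;> simp

theorem differentiable_coords (i : ℕ) :
    Differentiable ℝ fun x : Fin (n - 1) → ℝ => coords n x i := by
  unfold coords
  split
  · exact differentiable_pi.mp differentiable_id _
  · exact differentiable_const 0

theorem sum_coords_smul_unitv (x : Fin (n - 1) → ℝ) :
    ∑ j ∈ Finset.Icc 1 (n - 1), coords n x j • unitv n j = x := by
  funext i
  have hi : 1 ≤ i.val + 1 ∧ i.val + 1 ≤ n - 1 := ⟨by omega, i.isLt⟩
  simp only [Finset.sum_apply, Pi.smul_apply, unitv, smul_eq_mul, mul_ite, mul_one, mul_zero,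
    Finset.sum_ite_eq, Finset.mem_Icc, if_pos hi, coords, dif_pos hi]
  rfl

end Coordinates

theorem chiS4_smul (n k : ℕ) {t : ℝ} (ht : t ≠ 0) (x : Fin (n - 1) → ℝ) :
    chiS4 n k (t • x) = chiS4 n k x := by
  rw [chiS4, chiS4, coords_smul, (xi_isHomogeneous ℝ k).eval_smul, Pi.smul_apply,
    smul_eq_mul, mul_pow]
  exact mul_div_mul_left _ _ (pow_ne_zero _ ht)

theorem differentiableAt_chiS4 (n k : ℕ) {x : Fin (n - 1) → ℝ} (hx : coords n x 1 ≠ 0) :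
    DifferentiableAt ℝ (chiS4 n k) x := by
  have hnum := differentiable_eval_comp differentiable_coords (xi ℝ k) x
  have hden := (differentiable_coords 1 x).fun_pow (k + 1)
  unfold chiS4
  simp only [div_eq_mul_inv]
  exact hnum.fun_mul (hden.fun_inv (pow_ne_zero _ hx))

theorem chiS4_invariant (n : ℕ)
    (k : ℕ)
    (x : Fin (n - 1) → ℝ) (hx : coords n x 1 ≠ 0) :
    DifferentiableAt ℝ (chiS4 n k) x ∧
    ∑ j ∈ Finset.Icc 1 (n - 1),
      coords n x j * fderiv ℝ (chiS4 n k) x (unitv n j) = 0 := by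
  have hdiff := differentiableAt_chiS4 n k hx
  refine ⟨hdiff, ?_⟩
  have hinv : ∀ᶠ t in 𝓝 (1 : ℝ), chiS4 n k (t • x) = chiS4 n k x := by
    filter_upwards [isOpen_ne.mem_nhds one_ne_zero] with t ht
    exact chiS4_smul n k ht x
  calc ∑ j ∈ Finset.Icc 1 (n - 1), coords n x j * fderiv ℝ (chiS4 n k) x (unitv n j)
      = fderiv ℝ (chiS4 n k) x (∑ j ∈ Finset.Icc 1 (n - 1), coords n x j • unitv n j) := by
        simp only [map_sum, map_smul, smul_eq_mul]
    _ = fderiv ℝ (chiS4 n k) x x := by rw [sum_coords_smul_unitv]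
    _ = 0 := fderiv_apply_self_eq_zero_of_eventually_smul hdiff hinv
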